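/- For every p ∈ ℕ₀ and every n ∈ ℕ, one has H_n(−p, 1, 2) = H_n(−p)·H_n(1,2) + D^{(p)}(B)·H_n − C^{(p)}_0(n)·H_n(2) + C^{(p)}_{0,1}(n). -/

import Mathlib

/-- Extended multiple harmonic sum `H_n(k_1,…,k_r) = ∑_{n ≥ n_1 > ⋯ > n_r ≥ 1} 1/(n_1^{k_1} ⋯ n_r^{k_r})`,
with `H_n(∅) = 1`; the exponents may be arbitrary integers.  In particular `Hs n [-(p:ℤ)] = ∑_{m=1}^n m^p`
and `Hs n [1]` is the `n`-th harmonic number. -/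
def Hs : ℕ → List ℤ → ℚ
  | _, [] => 1
  | n, k :: ks => ∑ m ∈ Finset.Icc 1 n, ((m : ℚ) ^ k)⁻¹ * Hs (m - 1) ks

/-- The polynomial `C^{(p)}_{a_2,…,a_r}(x)`, where the list `a = [a_1, a_2, …, a_r]` is the *full*
subscript list including the leading `a_1 = 0` (so `Cpoly p [0]` is `C^{(p)}`, `Cpoly p [0,0]`
is `C^{(p)}_0`, `Cpoly p [0,1,2]` is `C^{(p)}_{1,2}`, …):
`C^{(p)}_{a_2,…,a_r}(x) = ∑_{j_1,…,j_r ≥ 0, j_1+⋯+j_r ≤ p-a_r}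
  (∏_{i=1}^r binom(p+1-a_i-j_1-⋯-j_{i-1}, j_i) B_{j_i} / (p+1-a_i-j_1-⋯-j_{i-1}))
    x^{p+1-a_r-j_1-⋯-j_r}`,
the zero polynomial if `p < a_r`, with `B_j = bernoulli' j`. -/
noncomputable def Cpoly (p : ℕ) (a : List ℕ) : Polynomial ℚ :=
  ∑ j ∈ Fintype.piFinset (fun _ : Fin a.length => Finset.range (p + 1)),
    if (∑ i, j i) + a.getLastD 0 ≤ p then
      Polynomial.C (∏ i : Fin a.length,
        ((p + 1 - a.get i - ∑ i' ∈ Finset.Iio i, j i').choose (j i) : ℚ) * bernoulli' (j i) /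
          ((p + 1 - a.get i - ∑ i' ∈ Finset.Iio i, j i' : ℕ) : ℚ)) *
        Polynomial.X ^ (p + 1 - a.getLastD 0 - ∑ i, j i)
    else 0

/-- Umbral evaluation `Q(B)` of a polynomial `Q(x) = ∑_m q_m x^m`: replace `x^m` by the
Bernoulli number `B_m = bernoulli' m` (the convention with `B_1 = +1/2`). -/
noncomputable def umbralB (Q : Polynomial ℚ) : ℚ := Q.sum fun m c => c * bernoulli' m

open Finset Polynomial

lemma sum_piFinset_succ {M : Type*} [AddCommMonoid M] {n : ℕ} (s : Finset ℕ)
    (f : (Fin (n+1) → ℕ) → M) :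
    ∑ j ∈ Fintype.piFinset (fun _ : Fin (n+1) => s), f j
      = ∑ a ∈ s, ∑ t ∈ Fintype.piFinset (fun _ : Fin n => s), f (Fin.cons a t) := by
  rw [← Finset.sum_product']
  apply Finset.sum_nbij' (i := fun j => (j 0, Fin.tail j)) (j := fun x => Fin.cons x.1 x.2)
  · intro j hj
    simp only [Fintype.mem_piFinset] at hj
    simp [Finset.mem_product, Fintype.mem_piFinset, hj, Fin.tail]
  · intro x hx
    simp only [Finset.mem_product, Fintype.mem_piFinset] at hx
    simp only [Fintype.mem_piFinset]
    intro i
    refine Fin.cases ?_ ?_ i <;> simp [hx.1, hx.2]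
  · intro j hj; simp [Fin.cons_self_tail]
  · intro x hx; simp
  · intro j hj; rw [Fin.cons_self_tail]

lemma sum_piFinset_zero {M : Type*} [AddCommMonoid M] (s : Finset ℕ)
    (f : (Fin 0 → ℕ) → M) :
    ∑ j ∈ Fintype.piFinset (fun _ : Fin 0 => s), f j = f finZeroElim := by
  rw [Finset.sum_eq_single_of_mem finZeroElim
      (Fintype.mem_piFinset.2 (fun i => i.elim0))]
  intro b hb hne; exact absurd (Subsingleton.elim b finZeroElim) hne

/-- The Faulhaber coefficient. -/
noncomputable def cc (q j : ℕ) : ℚ := ((q+1).choose j : ℚ) * bernoulli' j / ((q:ℚ)+1)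

lemma cop1 (p : ℕ) : Cpoly p [0] = ∑ j ∈ Finset.range (p+1),
    Polynomial.C (cc p j) * Polynomial.X ^ (p+1-j) := by
  simp only [Cpoly, List.length_cons, List.length_nil]
  rw [sum_piFinset_succ]
  refine Finset.sum_congr rfl ?_
  intro a ha
  rw [sum_piFinset_zero]
  have ha' : a ≤ p := Nat.lt_succ_iff.mp (Finset.mem_range.mp ha)
  have h0 : (Finset.Iio (0 : Fin (0+1))) = ∅ := by decide
  simp [cc, ha', Fin.sum_univ_one, Fin.prod_univ_one, h0]

lemma cop2 (p : ℕ) : Cpoly p [0,0] = ∑ a ∈ Finset.range (p+1),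
    Polynomial.C (cc p a) * Cpoly (p - a) [0] := by
  conv_lhs => simp only [Cpoly, List.length_cons, List.length_nil]
  rw [sum_piFinset_succ]
  refine Finset.sum_congr rfl ?_
  intro a ha
  have ha' : a ≤ p := Nat.lt_succ_iff.mp (Finset.mem_range.mp ha)
  rw [sum_piFinset_succ]
  refine Eq.trans (Finset.sum_congr rfl (fun b _ => sum_piFinset_zero _ _)) ?_
  rw [cop1, Finset.mul_sum]
  rw [← Finset.sum_subset (Finset.range_subset_range.2 (show p - a + 1 ≤ p + 1 by omega))
    (fun b hb hnb => ?_)]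
  · refine Finset.sum_congr rfl ?_
    intro b hb
    have hb' : b ≤ p - a := Nat.lt_succ_iff.mp (Finset.mem_range.mp hb)
    have h0 : (Finset.Iio (0 : Fin (0+1+1))) = ∅ := by decide
    have h1 : (Finset.Iio ((0 : Fin (0+1)).succ)) = {(0 : Fin (0+1+1))} := by decide
    simp only [Fin.sum_univ_succ, Fin.prod_univ_succ, Fin.cons_zero, Fin.cons_succ,
      Fin.sum_univ_zero, Fin.prod_univ_zero, h0, h1, Finset.sum_empty, Finset.sum_singleton,
      List.getLastD_cons, List.getLastD_nil, List.get, List.get_cons_succ', List.get_cons_zero]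
    rw [if_pos (by omega : a + (b + 0) + 0 ≤ p), ← mul_assoc (Polynomial.C (cc p a)), ← Polynomial.C_mul]
    congr 1
    · simp only [Nat.sub_zero]
      rw [(by omega : p + 1 - a = p - a + 1)]
      simp only [cc]
      push_cast
      ring
    · congr 1; omega
  · have h0 : (Finset.Iio (0 : Fin (0+1+1))) = ∅ := by decide
    have h1 : (Finset.Iio ((0 : Fin (0+1)).succ)) = {(0 : Fin (0+1+1))} := by decide
    simp only [Finset.mem_range, not_lt] at hnb
    simp only [Fin.sum_univ_succ, Fin.cons_zero, Fin.cons_succ, Fin.sum_univ_zero,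
      List.getLastD_cons, List.getLastD_nil]
    exact if_neg (by omega)

lemma cop3 (p : ℕ) : Cpoly p [0,0,1] = ∑ a ∈ Finset.range (p+1), ∑ b ∈ Finset.range (p+1),
    (if a + b + 1 ≤ p then
      Polynomial.C (cc p a) * (Polynomial.C (((p+1-a).choose b : ℚ) * bernoulli' b / ((p+1-a : ℕ) : ℚ))
        * Cpoly (p - 1 - a - b) [0]) else 0) := by
  conv_lhs => simp only [Cpoly, List.length_cons, List.length_nil]
  rw [sum_piFinset_succ]
  refine Finset.sum_congr rfl ?_
  intro a ha
  have ha' : a ≤ p := Nat.lt_succ_iff.mp (Finset.mem_range.mp ha)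
  rw [sum_piFinset_succ]
  refine Finset.sum_congr rfl ?_
  intro b hb
  have hb' : b ≤ p := Nat.lt_succ_iff.mp (Finset.mem_range.mp hb)
  rw [sum_piFinset_succ]
  refine Eq.trans (Finset.sum_congr rfl (fun c _ => sum_piFinset_zero _ _)) ?_
  have h0 : (Finset.Iio (0 : Fin (0+1+1+1))) = ∅ := by decide
  have h1 : (Finset.Iio (Fin.succ (0 : Fin (0+1+1)))) = {(0 : Fin (0+1+1+1))} := by decide
  have h2 : (Finset.Iio (Fin.succ (Fin.succ (0 : Fin (0+1))))) =
      {(0 : Fin (0+1+1+1)), Fin.succ 0} := by decide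
  have hne : (0 : Fin (0+1+1+1)) ≠ Fin.succ 0 := by decide
  by_cases hab : a + b + 1 ≤ p
  · rw [if_pos hab, cop1]
    rw [Finset.mul_sum, Finset.mul_sum]
    rw [← Finset.sum_subset (Finset.range_subset_range.2 (show p - 1 - a - b + 1 ≤ p + 1 by omega))
      (fun c hc hnc => ?_)]
    · refine Finset.sum_congr rfl ?_
      intro c hc
      have hc' : c ≤ p - 1 - a - b := Nat.lt_succ_iff.mp (Finset.mem_range.mp hc)
      simp only [Fin.sum_univ_succ, Fin.prod_univ_succ, Fin.cons_zero, Fin.cons_succ,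
        Fin.sum_univ_zero, Fin.prod_univ_zero, h0, h1, h2, Finset.sum_empty,
        Finset.sum_singleton, Finset.sum_pair hne,
        List.getLastD_cons, List.getLastD_nil, List.get, List.get_cons_succ', List.get_cons_zero]
      rw [if_pos (by omega : a + (b + (c + 0)) + 1 ≤ p)]
      rw [← mul_assoc (Polynomial.C (((p+1-a).choose b : ℚ) * bernoulli' b / ((p+1-a : ℕ) : ℚ))),
        ← mul_assoc (Polynomial.C (cc p a)), ← mul_assoc (Polynomial.C (cc p a)),
        ← Polynomial.C_mul, ← Polynomial.C_mul]
      congr 1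
      · simp only [Nat.sub_zero]
        rw [(by omega : p + 1 - 1 - (a + b) = p - 1 - a - b + 1)]
        simp only [cc]
        push_cast
        ring
      · congr 1; omega
    · simp only [Finset.mem_range, not_lt] at hnc
      simp only [Fin.sum_univ_succ, Fin.cons_zero, Fin.cons_succ, Fin.sum_univ_zero,
        List.getLastD_cons, List.getLastD_nil]
      exact if_neg (by omega)
  · rw [if_neg hab]
    refine Finset.sum_eq_zero (fun c _ => ?_)
    simp only [Fin.sum_univ_succ, Fin.cons_zero, Fin.cons_succ, Fin.sum_univ_zero,
      List.getLastD_cons, List.getLastD_nil]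
    exact if_neg (by omega)

/-- second-level coefficient -/
noncomputable def dd (p a b : ℕ) : ℚ := ((p+1-a).choose b : ℚ) * bernoulli' b / ((p+1-a : ℕ) : ℚ)

lemma cop2' (p : ℕ) : Cpoly p [0,0] = ∑ a ∈ Finset.range (p+1), ∑ b ∈ Finset.range (p+1),
    (if a + b ≤ p then Polynomial.C (cc p a) * Polynomial.C (dd p a b)
      * Polynomial.X ^ (p+1-(a+b)) else 0) := by
  conv_lhs => simp only [Cpoly, List.length_cons, List.length_nil]
  rw [sum_piFinset_succ]
  refine Finset.sum_congr rfl ?_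
  intro a ha
  have ha' : a ≤ p := Nat.lt_succ_iff.mp (Finset.mem_range.mp ha)
  rw [sum_piFinset_succ]
  refine Eq.trans (Finset.sum_congr rfl (fun b _ => sum_piFinset_zero _ _)) ?_
  refine Finset.sum_congr rfl ?_
  intro b hb
  have h0 : (Finset.Iio (0 : Fin (0+1+1))) = ∅ := by decide
  have h1 : (Finset.Iio ((0 : Fin (0+1)).succ)) = {(0 : Fin (0+1+1))} := by decide
  simp only [Fin.sum_univ_succ, Fin.prod_univ_succ, Fin.cons_zero, Fin.cons_succ,
    Fin.sum_univ_zero, Fin.prod_univ_zero, h0, h1, Finset.sum_empty, Finset.sum_singleton,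
    List.getLastD_cons, List.getLastD_nil, List.get, List.get_cons_succ', List.get_cons_zero]
  by_cases hab : a + b ≤ p
  · rw [if_pos (by omega : a + (b + 0) + 0 ≤ p), if_pos hab,
      ← Polynomial.C_mul]
    congr 1
    · simp only [Nat.sub_zero, cc, dd]
      push_cast
      ring
  · rw [if_neg (by omega), if_neg hab]

lemma evalA (q n : ℕ) : (Cpoly q [0]).eval (n:ℚ) = ∑ m ∈ Finset.Icc 1 n, (m:ℚ)^q := by
  rw [cop1, Polynomial.eval_finset_sum, ← Finset.Ico_add_one_right_eq_Icc, sum_Ico_pow]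
  refine Finset.sum_congr rfl (fun i hi => ?_)
  simp only [Polynomial.eval_mul, Polynomial.eval_C, Polynomial.eval_pow, Polynomial.eval_X, cc]
  ring

lemma dX (p : ℕ) : (Cpoly p [0]).divX = ∑ j ∈ Finset.range (p+1),
    Polynomial.C (cc p j) * Polynomial.X ^ (p-j) := by
  rw [cop1, ← Polynomial.divX_hom_toFun, map_sum]
  refine Finset.sum_congr rfl (fun j hj => ?_)
  have hj' : j ≤ p := Nat.lt_succ_iff.mp (Finset.mem_range.mp hj)
  rw [Polynomial.divX_hom_toFun, Polynomial.divX_C_mul, Polynomial.divX_X_pow,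
    if_neg (by omega : ¬ p + 1 - j = 0)]
  congr 2
  omega

lemma evalD (p n : ℕ) : (Cpoly p [0]).divX.eval (n:ℚ)
    = ∑ j ∈ Finset.range (p+1), cc p j * (n:ℚ)^(p-j) := by
  rw [dX, Polynomial.eval_finset_sum]
  simp [Polynomial.eval_mul, Polynomial.eval_C, Polynomial.eval_pow, Polynomial.eval_X]

lemma umbral_CXpow (a : ℚ) (k : ℕ) : umbralB (Polynomial.C a * Polynomial.X^k)
    = a * bernoulli' k := by
  rw [umbralB, Polynomial.C_mul_X_pow_eq_monomial, Polynomial.sum_monomial_index]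
  simp

lemma umbral_add (P Q : Polynomial ℚ) : umbralB (P + Q) = umbralB P + umbralB Q := by
  rw [umbralB, umbralB, umbralB, Polynomial.sum_add_index] <;> intros <;> simp [add_mul]

lemma umbral_sum (s : Finset ℕ) (f : ℕ → Polynomial ℚ) :
    umbralB (∑ j ∈ s, f j) = ∑ j ∈ s, umbralB (f j) := by
  classical
  induction s using Finset.induction with
  | empty => simp [umbralB]
  | insert _ _ h ih => rw [Finset.sum_insert h, Finset.sum_insert h, umbral_add, ih]

lemma uval (p : ℕ) : umbralB ((Cpoly p [0]).divX)
    = ∑ j ∈ Finset.range (p+1), cc p j * bernoulli' (p-j) := by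
  rw [dX, umbral_sum]
  exact Finset.sum_congr rfl (fun j _ => umbral_CXpow _ _)

lemma evalB (p n : ℕ) : (Cpoly p [0,0]).eval (n:ℚ)
    = ∑ m ∈ Finset.Icc 1 n, (Cpoly p [0]).divX.eval (m:ℚ) := by
  rw [cop2, Polynomial.eval_finset_sum]
  calc ∑ a ∈ Finset.range (p+1), ((Polynomial.C (cc p a)) * Cpoly (p-a) [0]).eval (n:ℚ)
      = ∑ a ∈ Finset.range (p+1), ∑ m ∈ Finset.Icc 1 n, cc p a * (m:ℚ)^(p-a) := by
        refine Finset.sum_congr rfl (fun a _ => ?_)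
        rw [Polynomial.eval_mul, Polynomial.eval_C, evalA, Finset.mul_sum]
    _ = ∑ m ∈ Finset.Icc 1 n, ∑ a ∈ Finset.range (p+1), cc p a * (m:ℚ)^(p-a) :=
        Finset.sum_comm
    _ = _ := Finset.sum_congr rfl (fun m _ => (evalD p m).symm)

lemma dd_last (p a : ℕ) (ha : a ≤ p) : dd p a (p-a) = bernoulli' (p-a) := by
  rw [dd, (show p+1-a = (p-a)+1 by omega), Nat.choose_succ_self_right]
  rw [mul_comm, mul_div_assoc, div_self (Nat.cast_ne_zero.2 (Nat.succ_ne_zero (p-a)) :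
    (((p-a)+1 : ℕ) : ℚ) ≠ 0), mul_one]

lemma ite_sum_swap (c : Prop) [Decidable c] (s : Finset ℕ) (g : ℕ → ℚ) :
    (if c then ∑ m ∈ s, g m else 0) = ∑ m ∈ s, (if c then g m else 0) := by
  split_ifs with h
  · rfl
  · simp

lemma evalC (p n : ℕ) : (Cpoly p [0,0,1]).eval (n:ℚ)
    = ∑ m ∈ Finset.Icc 1 n, ((m:ℚ)^2)⁻¹ *
        ((Cpoly p [0,0]).eval (m:ℚ) - umbralB ((Cpoly p [0]).divX) * m) := by
  have LHS : (Cpoly p [0,0,1]).eval (n:ℚ)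
      = ∑ m ∈ Finset.Icc 1 n, ∑ a ∈ Finset.range (p+1), ∑ b ∈ Finset.range (p+1),
          (if a + b + 1 ≤ p then cc p a * dd p a b * (m:ℚ)^(p-1-a-b) else 0) := by
    rw [cop3, Polynomial.eval_finset_sum]
    calc ∑ a ∈ Finset.range (p+1), Polynomial.eval (n:ℚ) (∑ b ∈ Finset.range (p+1), _)
        = ∑ a ∈ Finset.range (p+1), ∑ b ∈ Finset.range (p+1), ∑ m ∈ Finset.Icc 1 n,
            (if a + b + 1 ≤ p then cc p a * dd p a b * (m:ℚ)^(p-1-a-b) else 0) := by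
          refine Finset.sum_congr rfl (fun a _ => ?_)
          rw [Polynomial.eval_finset_sum]
          refine Finset.sum_congr rfl (fun b _ => ?_)
          rw [apply_ite (Polynomial.eval (n:ℚ)), Polynomial.eval_zero, Polynomial.eval_mul,
            Polynomial.eval_mul, Polynomial.eval_C, Polynomial.eval_C, evalA, dd,
            Finset.mul_sum, Finset.mul_sum, ite_sum_swap]
          refine Finset.sum_congr rfl (fun m _ => ?_)
          split_ifs with h
          · ring
          · rfl
      _ = ∑ a ∈ Finset.range (p+1), ∑ m ∈ Finset.Icc 1 n, ∑ b ∈ Finset.range (p+1),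
            (if a + b + 1 ≤ p then cc p a * dd p a b * (m:ℚ)^(p-1-a-b) else 0) :=
          Finset.sum_congr rfl (fun a _ => Finset.sum_comm)
      _ = ∑ m ∈ Finset.Icc 1 n, ∑ a ∈ Finset.range (p+1), ∑ b ∈ Finset.range (p+1),
            (if a + b + 1 ≤ p then cc p a * dd p a b * (m:ℚ)^(p-1-a-b) else 0) :=
          Finset.sum_comm
  rw [LHS]
  refine Finset.sum_congr rfl (fun m hm => ?_)
  have hm1 : 1 ≤ m := (Finset.mem_Icc.mp hm).1
  have hmne : ((m:ℚ)^2) ≠ 0 := by positivity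
  have E00 : (Cpoly p [0,0]).eval (m:ℚ)
      = ∑ a ∈ Finset.range (p+1), ∑ b ∈ Finset.range (p+1),
          (if a + b ≤ p then cc p a * dd p a b * (m:ℚ)^(p+1-(a+b)) else 0) := by
    rw [cop2', Polynomial.eval_finset_sum]
    refine Finset.sum_congr rfl (fun a _ => ?_)
    rw [Polynomial.eval_finset_sum]
    refine Finset.sum_congr rfl (fun b _ => ?_)
    rw [apply_ite (Polynomial.eval (m:ℚ))]
    simp [dd]
  have UU : umbralB ((Cpoly p [0]).divX) * (m:ℚ)
      = ∑ a ∈ Finset.range (p+1), cc p a * bernoulli' (p-a) * m := by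
    rw [uval, Finset.sum_mul]
  have key : ∀ a ∈ Finset.range (p+1),
      (∑ b ∈ Finset.range (p+1), (if a + b ≤ p then cc p a * dd p a b * (m:ℚ)^(p+1-(a+b)) else 0))
      = (∑ b ∈ Finset.range (p+1),
          (m:ℚ)^2 * (if a + b + 1 ≤ p then cc p a * dd p a b * (m:ℚ)^(p-1-a-b) else 0))
        + cc p a * bernoulli' (p-a) * m := by
    intro a ha
    have ha' : a ≤ p := Nat.lt_succ_iff.mp (Finset.mem_range.mp ha)
    have hZ : cc p a * bernoulli' (p-a) * (m:ℚ)
        = ∑ b ∈ Finset.range (p+1), (if b = p - a then cc p a * bernoulli' (p-a) * (m:ℚ) else 0) := by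
      rw [Finset.sum_ite_eq' (Finset.range (p+1)) (p-a)
        (fun _ => cc p a * bernoulli' (p-a) * (m:ℚ)),
        if_pos (Finset.mem_range.2 (by omega))]
    rw [hZ, ← Finset.sum_add_distrib]
    refine Finset.sum_congr rfl (fun b hb => ?_)
    have hb' : b ≤ p := Nat.lt_succ_iff.mp (Finset.mem_range.mp hb)
    by_cases h2 : a + b + 1 ≤ p
    · rw [if_pos (by omega : a + b ≤ p), if_pos h2, if_neg (by omega : ¬ b = p - a), add_zero,
        (show p+1-(a+b) = 2 + (p-1-a-b) by omega), pow_add]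
      ring
    · by_cases h3 : b = p - a
      · subst h3
        rw [if_pos (by omega : a + (p-a) ≤ p), if_neg h2, if_pos rfl, mul_zero, zero_add,
          dd_last p a ha', (show p+1-(a+(p-a)) = 1 by omega), pow_one]
      · rw [if_neg (by omega : ¬ a + b ≤ p), if_neg h2, if_neg h3, mul_zero, zero_add]
  rw [E00, UU, Finset.sum_congr rfl key, Finset.sum_add_distrib, add_sub_cancel_right]
  have hpull : (∑ a ∈ Finset.range (p+1), ∑ b ∈ Finset.range (p+1),
      (m:ℚ)^2 * (if a + b + 1 ≤ p then cc p a * dd p a b * (m:ℚ)^(p-1-a-b) else 0))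
      = (m:ℚ)^2 * ∑ a ∈ Finset.range (p+1), ∑ b ∈ Finset.range (p+1),
      (if a + b + 1 ≤ p then cc p a * dd p a b * (m:ℚ)^(p-1-a-b) else 0) := by
    rw [Finset.mul_sum]
    exact Finset.sum_congr rfl (fun a _ => (Finset.mul_sum _ _ _).symm)
  rw [hpull, inv_mul_cancel_left₀ hmne]

lemma Hs_nil (n : ℕ) : Hs n [] = 1 := rfl

lemma Hs_cons (n : ℕ) (k : ℤ) (ks : List ℤ) :
    Hs n (k :: ks) = ∑ m ∈ Finset.Icc 1 n, ((m : ℚ) ^ k)⁻¹ * Hs (m - 1) ks := rfl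

lemma Hs_succ (n : ℕ) (k : ℤ) (ks : List ℤ) :
    Hs (n+1) (k :: ks) = Hs n (k :: ks) + (((n+1 : ℕ) : ℚ) ^ k)⁻¹ * Hs n ks := by
  rw [Hs_cons, Hs_cons, Finset.sum_Icc_succ_top (by omega : 1 ≤ n+1)]
  simp

lemma Hs_neg (p n : ℕ) : Hs n [-(p:ℤ)] = ∑ m ∈ Finset.Icc 1 n, (m:ℚ)^p := by
  rw [Hs_cons]
  refine Finset.sum_congr rfl (fun m _ => ?_)
  rw [Hs_nil, mul_one, zpow_neg, inv_inv, zpow_natCast]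

lemma key6 (p n : ℕ) :
    Hs n [-(p : ℤ), 1, 2] =
      Hs n [-(p : ℤ)] * Hs n [1, 2] + umbralB (Cpoly p [0]).divX * Hs n [1]
        - (Cpoly p [0, 0]).eval (n : ℚ) * Hs n [2] + (Cpoly p [0, 0, 1]).eval (n : ℚ) := by
  induction n with
  | zero =>
      rw [evalB, evalC]
      simp [Hs_cons]
  | succ n ih =>
      have hx : ((n+1 : ℕ) : ℚ) ≠ 0 := Nat.cast_ne_zero.2 (Nat.succ_ne_zero n)
      -- the divX evaluation
      have hD : (Cpoly p [0]).divX.eval ((n+1 : ℕ) : ℚ) * ((n+1 : ℕ) : ℚ)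
          = Hs n [-(p:ℤ)] + ((n+1 : ℕ) : ℚ)^p := by
        have h0 : (Cpoly p [0]).coeff 0 = 0 := by
          rw [Polynomial.coeff_zero_eq_eval_zero, (show (0:ℚ) = ((0:ℕ):ℚ) by norm_num), evalA]
          simp
        have := congrArg (Polynomial.eval ((n+1 : ℕ) : ℚ)) (Polynomial.X_mul_divX_add (Cpoly p [0]))
        rw [Polynomial.eval_add, Polynomial.eval_mul, Polynomial.eval_X, Polynomial.eval_C, h0,
          add_zero, evalA, ← Hs_neg, Hs_succ] at this
        rw [mul_comm, this, Hs_nil, mul_one, zpow_neg, inv_inv, zpow_natCast]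
      rw [Hs_succ, Hs_succ, Hs_succ, Hs_succ, Hs_succ, evalB, evalC,
        Finset.sum_Icc_succ_top (by omega : 1 ≤ n+1),
        Finset.sum_Icc_succ_top (by omega : 1 ≤ n+1)]
      rw [Hs_nil, ← evalB p n, ← evalC p n, ih]
      rw [evalB p (n+1), Finset.sum_Icc_succ_top (by omega : 1 ≤ n+1), ← evalB p n]
      have hD' : (Cpoly p [0]).divX.eval ((n+1 : ℕ) : ℚ)
          = (Hs n [-(p:ℤ)] + ((n+1 : ℕ) : ℚ)^p) / ((n+1 : ℕ) : ℚ) :=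
        eq_div_of_mul_eq hx hD
      rw [hD']
      rw [zpow_one, (show ((2:ℤ)) = ((2:ℕ):ℤ) by norm_num), zpow_natCast, zpow_neg, inv_inv,
        zpow_natCast]
      field_simp
      ring


/-- `H_n(−p,1,2) = H_n(−p)·H_n(1,2) + D^{(p)}(B)·H_n − C^{(p)}_0(n)·H_n(2)
+ C^{(p)}_{0,1}(n)`, where `D^{(p)}(x) = C^{(p)}(x)/x` (i.e. `(Cpoly p [0]).divX`) and `D^{(p)}(B)`
is its umbral evaluation at the Bernoulli numbers. -/
theorem stmt_6 (p : ℕ) (n : ℕ) (hn : 0 < n) :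
    Hs n [-(p : ℤ), 1, 2] =
      Hs n [-(p : ℤ)] * Hs n [1, 2] + umbralB (Cpoly p [0]).divX * Hs n [1]
        - (Cpoly p [0, 0]).eval (n : ℚ) * Hs n [2] + (Cpoly p [0, 0, 1]).eval (n : ℚ) := by
  exact key6 p n
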